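/- arXiv:1411.5622 — 2 statements merged into one kernel-verified Lean document; each statement's English description precedes it below -/
import Mathlib

section
/- Let α, β ∈ (0,1], let γ, δ, η, ζ ≥ 0 with d := ηδ + γζ + γη/α > 0, let G be the associated general Green's function, let h : [0,1] → ℝ be continuous, and define x(t) = ∫₀¹ G(t,s) h(s) s^{β−1} ds. Then the limit L₁ := lim_{t→1⁻} t^{1−α} x′(t) exists, equals −(η/d) ∫₀¹ [δ + (γ/α)s^α] h(s) s^{β−1} ds, and the right boundary condition η x(1) + ζ L₁ = 0 holds. -/
/-!
With `P s = δ + (γ/α) s^α` and `Q t = ζ + (η/α)(1 - t^α)` the kernel is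
`G t s = P (min t s) Q (max t s) / d`, so
`d · x t = Q t ∫₀ᵗ P h s^{β-1} + P t ∫ₜ¹ Q h s^{β-1}`. Differentiating, the two terms coming from
the variable limits of integration cancel, leaving
`d · x' t = t^{α-1} (-η ∫₀ᵗ P h s^{β-1} + γ ∫ₜ¹ Q h s^{β-1})`. The weight `t^{1-α}` removes the
singular factor, and as `t → 1⁻` the second integral vanishes. At `t = 1` only the first term of
`x` survives, with `Q 1 = ζ`, which gives the boundary relation.
-/

open Set MeasureTheory intervalIntegral Filter Topology

noncomputable def separableKernel (u v : ℝ → ℝ) (t s : ℝ) : ℝ :=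
  if s ≤ t then u s * v t else u t * v s

section SeparableKernel

variable {u v w : ℝ → ℝ} {a b t : ℝ}

theorem integral_separableKernel_mul (ht : t ∈ Icc a b)
    (hu : IntervalIntegrable (fun s => u s * w s) volume a b)
    (hv : IntervalIntegrable (fun s => v s * w s) volume a b) :
    ∫ s in a..b, separableKernel u v t s * w s =
      v t * (∫ s in a..t, u s * w s) + u t * ∫ s in t..b, v s * w s := by
  have ht' : t ∈ uIcc a b := Icc_subset_uIcc ht
  have h_left : EqOn (fun s => separableKernel u v t s * w s) (fun s => v t * (u s * w s))
      (uIcc a t) := by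
    intro s hs
    rw [uIcc_of_le ht.1] at hs
    simp only [separableKernel, if_pos hs.2]
    ring
  have h_right : EqOn (fun s => separableKernel u v t s * w s) (fun s => u t * (v s * w s))
      (uIcc t b) := by
    intro s hs
    rw [uIcc_of_le ht.2] at hs
    rcases hs.1.eq_or_lt with rfl | hts
    · simp only [separableKernel, le_refl, if_true]
      ring
    · simp only [separableKernel, if_neg hts.not_ge]
      ring
  have hu_left := (hu.mono_set (uIcc_subset_uIcc_left ht')).const_mul (v t)
  have hv_right := (hv.mono_set (uIcc_subset_uIcc_right ht')).const_mul (u t)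
  rw [← integral_add_adjacent_intervals
      (hu_left.congr (h_left.symm.mono uIoc_subset_uIcc))
      (hv_right.congr (h_right.symm.mono uIoc_subset_uIcc)),
    integral_congr h_left, integral_congr h_right, intervalIntegral.integral_const_mul,
    intervalIntegral.integral_const_mul]

theorem hasDerivAt_integral_separableKernel_mul (ht : t ∈ Ioo a b) {u' v' : ℝ}
    (hu' : HasDerivAt u u' t) (hv' : HasDerivAt v v' t) (hw : ContinuousAt w t)
    (hu : IntervalIntegrable (fun s => u s * w s) volume a b)
    (hv : IntervalIntegrable (fun s => v s * w s) volume a b) :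
    HasDerivAt (fun τ => ∫ s in a..b, separableKernel u v τ s * w s)
      (v' * (∫ s in a..t, u s * w s) + u' * ∫ s in t..b, v s * w s) t := by
  have ht' : t ∈ uIcc a b := Icc_subset_uIcc (Ioo_subset_Icc_self ht)
  have h_meas : ∀ f : ℝ → ℝ, IntervalIntegrable f volume a b →
      StronglyMeasurableAtFilter f (𝓝 t) := fun f hf =>
    ⟨Ioo a b, Ioo_mem_nhds ht.1 ht.2, (hf.1.mono_set Ioo_subset_Ioc_self).aestronglyMeasurable⟩
  have hA : HasDerivAt (fun τ => ∫ s in a..τ, u s * w s) (u t * w t) t :=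
    integral_hasDerivAt_right (hu.mono_set (uIcc_subset_uIcc_left ht')) (h_meas _ hu)
      (hu'.continuousAt.mul hw)
  have hB : HasDerivAt (fun τ => ∫ s in τ..b, v s * w s) (-(v t * w t)) t :=
    integral_hasDerivAt_left (hv.mono_set (uIcc_subset_uIcc_right ht')) (h_meas _ hv)
      (hv'.continuousAt.mul hw)
  have h_split : (fun τ => ∫ s in a..b, separableKernel u v τ s * w s) =ᶠ[𝓝 t]
      fun τ => v τ * (∫ s in a..τ, u s * w s) + u τ * ∫ s in τ..b, v s * w s :=
    eventually_of_mem (Ioo_mem_nhds ht.1 ht.2) fun τ hτ =>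
      integral_separableKernel_mul (Ioo_subset_Icc_self hτ) hu hv
  -- the terms `± u t * v t * w t` from differentiating the limits of integration cancel
  exact (((hv'.fun_mul hA).fun_add (hu'.fun_mul hB)).congr_of_eventuallyEq h_split).congr_deriv
    (by ring)

end SeparableKernel

theorem tendsto_integral_upper_nhdsLT {f : ℝ → ℝ} {a b : ℝ} (hab : a < b)
    (hf : IntervalIntegrable f volume a b) :
    Tendsto (fun t => ∫ s in a..t, f s) (𝓝[<] b) (𝓝 (∫ s in a..b, f s)) :=
  ((continuousOn_primitive_interval' hf left_mem_uIcc) b right_mem_uIcc).mono_of_mem_nhdsWithin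
    (by rw [uIcc_of_le hab.le]; exact Icc_mem_nhdsLT hab)

theorem tendsto_integral_lower_nhdsLT_zero {f : ℝ → ℝ} {a b : ℝ} (hab : a < b)
    (hf : IntervalIntegrable f volume a b) :
    Tendsto (fun t => ∫ s in t..b, f s) (𝓝[<] b) (𝓝 0) := by
  have h := (tendsto_integral_upper_nhdsLT hab hf).const_sub (∫ s in a..b, f s)
  rw [sub_self] at h
  refine h.congr' (eventually_of_mem (Ioc_mem_nhdsLT hab) fun t ht => ?_)
  exact integral_interval_sub_left hf (hf.mono_set (uIcc_subset_uIcc_left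
    (Icc_subset_uIcc (Ioc_subset_Icc_self ht))))

section PowerFactors

variable {α t : ℝ}

theorem hasDerivAt_const_add_div_mul_rpow (c k : ℝ) (hα : α ≠ 0) (ht : 0 < t) :
    HasDerivAt (fun s : ℝ => c + k / α * s ^ α) (k * t ^ (α - 1)) t :=
  (((Real.hasDerivAt_rpow_const (Or.inl ht.ne')).const_mul (k / α)).const_add c).congr_deriv
    (by field_simp)

theorem hasDerivAt_const_add_div_mul_one_sub_rpow (c k : ℝ) (hα : α ≠ 0) (ht : 0 < t) :
    HasDerivAt (fun s : ℝ => c + k / α * (1 - s ^ α)) (-k * t ^ (α - 1)) t :=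
  ((((hasDerivAt_const t 1).fun_sub (Real.hasDerivAt_rpow_const (p := α) (Or.inl ht.ne')))
    |>.const_mul (k / α)).const_add c).congr_deriv (by field_simp; ring)

end PowerFactors

noncomputable def greenFunction (α γ δ η ζ d t s : ℝ) : ℝ :=
  1 / d * separableKernel (fun s => δ + γ / α * s ^ α) (fun s => ζ + η / α * (1 - s ^ α))
    t s

section GreenFunction

variable {α γ δ η ζ d t : ℝ} {w : ℝ → ℝ}

theorem integral_greenFunction_mul (t : ℝ) :
    ∫ s in (0:ℝ)..1, greenFunction α γ δ η ζ d t s * w s =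
      1 / d * ∫ s in (0:ℝ)..1, separableKernel (fun s => δ + γ / α * s ^ α)
        (fun s => ζ + η / α * (1 - s ^ α)) t s * w s := by
  simp only [greenFunction, mul_assoc, intervalIntegral.integral_const_mul]

theorem intervalIntegrable_left_factor_mul (hα : 0 < α) (hw : IntervalIntegrable w volume 0 1) :
    IntervalIntegrable (fun s => (δ + γ / α * s ^ α) * w s) volume 0 1 :=
  hw.continuousOn_mul (by fun_prop (disch := exact hα.le))

theorem intervalIntegrable_right_factor_mul (hα : 0 < α) (hw : IntervalIntegrable w volume 0 1) :
    IntervalIntegrable (fun s => (ζ + η / α * (1 - s ^ α)) * w s) volume 0 1 :=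
  hw.continuousOn_mul (by fun_prop (disch := exact hα.le))

theorem integral_greenFunction_one_mul (hα : 0 < α) (hw : IntervalIntegrable w volume 0 1) :
    ∫ s in (0:ℝ)..1, greenFunction α γ δ η ζ d 1 s * w s =
      ζ / d * ∫ s in (0:ℝ)..1, (δ + γ / α * s ^ α) * w s := by
  rw [integral_greenFunction_mul, integral_separableKernel_mul ⟨zero_le_one, le_rfl⟩
    (intervalIntegrable_left_factor_mul hα hw) (intervalIntegrable_right_factor_mul hα hw),
    integral_same]
  simp only [Real.one_rpow, sub_self]
  ring

theorem hasDerivAt_integral_greenFunction_mul (hα : 0 < α) (hw : IntervalIntegrable w volume 0 1)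
    (ht : t ∈ Ioo 0 1) (hwt : ContinuousAt w t) :
    HasDerivAt (fun τ => ∫ s in (0:ℝ)..1, greenFunction α γ δ η ζ d τ s * w s)
      (t ^ (α - 1) / d * (-η * (∫ s in (0:ℝ)..t, (δ + γ / α * s ^ α) * w s) +
        γ * ∫ s in t..(1:ℝ), (ζ + η / α * (1 - s ^ α)) * w s)) t := by
  simp only [integral_greenFunction_mul]
  refine ((hasDerivAt_integral_separableKernel_mul ht
    (hasDerivAt_const_add_div_mul_rpow δ γ hα.ne' ht.1)
    (hasDerivAt_const_add_div_mul_one_sub_rpow ζ η hα.ne' ht.1) hwt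
    (intervalIntegrable_left_factor_mul hα hw)
    (intervalIntegrable_right_factor_mul hα hw)).const_mul (1 / d)).congr_deriv ?_
  ring

theorem tendsto_rpow_mul_deriv_integral_greenFunction_mul (hα : 0 < α)
    (hw : IntervalIntegrable w volume 0 1) (hwc : ContinuousOn w (Ioo 0 1)) :
    Tendsto (fun t => t ^ (1 - α) * deriv (fun τ => ∫ s in (0:ℝ)..1,
        greenFunction α γ δ η ζ d τ s * w s) t) (𝓝[<] 1)
      (𝓝 (-(η / d) * ∫ s in (0:ℝ)..1, (δ + γ / α * s ^ α) * w s)) := by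
  have hA := tendsto_integral_upper_nhdsLT one_pos
    (intervalIntegrable_left_factor_mul (δ := δ) (γ := γ) hα hw)
  have hB := tendsto_integral_lower_nhdsLT_zero one_pos
    (intervalIntegrable_right_factor_mul (ζ := ζ) (η := η) hα hw)
  have h_lim := ((hA.const_mul (-η)).add (hB.const_mul γ)).const_mul (1 / d)
  rw [mul_zero, add_zero, ← mul_assoc, one_div_mul_eq_div, neg_div] at h_lim
  refine h_lim.congr' (eventually_of_mem (Ioo_mem_nhdsLT one_pos) fun t ht => ?_)
  have h_cancel : t ^ (1 - α) * t ^ (α - 1) = 1 := by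
    rw [← Real.rpow_add ht.1]
    simp
  beta_reduce
  rw [(hasDerivAt_integral_greenFunction_mul hα hw ht
    (hwc.continuousAt (Ioo_mem_nhds ht.1 ht.2))).deriv]
  linear_combination -(1 / d * (-η * (∫ s in (0:ℝ)..t, (δ + γ / α * s ^ α) * w s) +
    γ * ∫ s in t..(1:ℝ), (ζ + η / α * (1 - s ^ α)) * w s)) * h_cancel

end GreenFunction

theorem right_boundary_condition_general
    (α β : ℝ) (hα : α ∈ Set.Ioc (0:ℝ) 1) (hβ : β ∈ Set.Ioc (0:ℝ) 1)
    (γ δ η ζ : ℝ)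
    (d : ℝ)
    (G : ℝ → ℝ → ℝ)
    (hG : ∀ t s : ℝ, G t s = if s ≤ t
        then (1 / d) * (δ + (γ / α) * s ^ α) * (ζ + (η / α) * (1 - t ^ α))
        else (1 / d) * (δ + (γ / α) * t ^ α) * (ζ + (η / α) * (1 - s ^ α)))
    (h : ℝ → ℝ) (hh : ContinuousOn h (Set.Icc 0 1))
    (x : ℝ → ℝ) (hx : ∀ t : ℝ, x t = ∫ s in (0:ℝ)..1, G t s * h s * s ^ (β - 1))
    (L₁ : ℝ)
    (hL₁ : L₁ = -(η / d) * ∫ s in (0:ℝ)..1, (δ + (γ / α) * s ^ α) * h s * s ^ (β - 1)) :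
    Filter.Tendsto (fun t : ℝ => t ^ (1 - α) * deriv x t)
      (nhdsWithin 1 (Set.Iio (1:ℝ))) (nhds L₁) ∧
    η * x 1 + ζ * L₁ = 0 := by
  set w : ℝ → ℝ := fun s => h s * s ^ (β - 1)
  have hG' : G = greenFunction α γ δ η ζ d := by
    ext t s
    rw [hG]
    simp only [greenFunction, separableKernel]
    split_ifs <;> ring
  have hx' : x = fun t => ∫ s in (0:ℝ)..1, greenFunction α γ δ η ζ d t s * w s := by
    ext t
    simp only [hx, hG', w, mul_assoc]
  have hL₁' : L₁ = -(η / d) * ∫ s in (0:ℝ)..1, (δ + γ / α * s ^ α) * w s := by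
    simp only [hL₁, w, mul_assoc]
  have hw : IntervalIntegrable w volume 0 1 :=
    (intervalIntegrable_rpow' (by linarith [hβ.1])).continuousOn_mul
      (by rwa [uIcc_of_le zero_le_one])
  have hwc : ContinuousOn w (Ioo 0 1) :=
    (hh.mono Ioo_subset_Icc_self).mul (continuousOn_id.rpow_const fun s hs => Or.inl hs.1.ne')
  refine ⟨?_, ?_⟩
  · rw [hx', hL₁']
    exact tendsto_rpow_mul_deriv_integral_greenFunction_mul hα.1 hw hwc
  · rw [hx', hL₁']
    beta_reduce
    rw [integral_greenFunction_one_mul hα.1 hw]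
    ring

/-- With the setup of the general Green's function problem, the limit
`L₁ = lim_{t→1⁻} t^{1−α} x′(t)` exists and equals
`−(η/d) ∫₀¹ [δ + (γ/α)s^α] h(s) s^{β−1} ds`, and `η x(1) + ζ L₁ = 0`. -/
theorem right_boundary_condition
    (α β : ℝ) (hα : α ∈ Set.Ioc (0:ℝ) 1) (hβ : β ∈ Set.Ioc (0:ℝ) 1)
    (γ δ η ζ : ℝ) (hγ : 0 ≤ γ) (hδ : 0 ≤ δ) (hη : 0 ≤ η) (hζ : 0 ≤ ζ)
    (d : ℝ) (hd : d = η * δ + γ * ζ + γ * η / α) (hdpos : 0 < d)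
    (G : ℝ → ℝ → ℝ)
    (hG : ∀ t s : ℝ, G t s = if s ≤ t
        then (1 / d) * (δ + (γ / α) * s ^ α) * (ζ + (η / α) * (1 - t ^ α))
        else (1 / d) * (δ + (γ / α) * t ^ α) * (ζ + (η / α) * (1 - s ^ α)))
    (h : ℝ → ℝ) (hh : ContinuousOn h (Set.Icc 0 1))
    (x : ℝ → ℝ) (hx : ∀ t : ℝ, x t = ∫ s in (0:ℝ)..1, G t s * h s * s ^ (β - 1))
    (L₁ : ℝ)
    (hL₁ : L₁ = -(η / d) * ∫ s in (0:ℝ)..1, (δ + (γ / α) * s ^ α) * h s * s ^ (β - 1)) :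
    Filter.Tendsto (fun t : ℝ => t ^ (1 - α) * deriv x t)
      (nhdsWithin 1 (Set.Iio (1:ℝ))) (nhds L₁) ∧
    η * x 1 + ζ * L₁ = 0 :=
  right_boundary_condition_general α β hα hβ γ δ η ζ d G hG h hh x hx L₁ hL₁
end

section
/- Let α, β ∈ (0,1], let G be the right-focal Green's function defined by G(t,s) = (1/α)s^α if s ≤ t and G(t,s) = (1/α)t^α if t ≤ s, and let h : [0,1] → ℝ be continuous. Define x(t) = ∫₀¹ G(t,s) h(s) s^{β−1} ds. Then x(0) = 0, the limit lim_{t→1⁻} t^{1−α} x′(t) exists and equals 0, and for every t ∈ (0,1), x is differentiable at t, the function y(t) := t^{1−α} x′(t) is differentiable at t, and −t^{1−β} y′(t) = h(t). -/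
open MeasureTheory Set Filter Real Topology intervalIntegral

/-!
With `p u = u ^ α / α` the kernel is `G t s = p (min t s)`, so for `t ∈ [0, 1]`
`x t = ∫₀ᵗ p s f s ds + p t ∫ₜ¹ f s ds`, where `f s = h s s ^ (β - 1)` is integrable as `β > 0`.
Differentiating, the two terms `± p t f t` cancel and `x' t = p' t ∫ₜ¹ f`; since
`t ^ (1 - α) p' t = 1`, `y t = ∫ₜ¹ f`, which tends to `0` at `1` and has derivative `-f t`.
Finally `x 0 = p 0 ∫₀¹ f = 0`.
-/

section MinKernel

variable {a b t : ℝ} {p f : ℝ → ℝ}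

theorem hasDerivAt_integral_left_of_continuousOn (ht : t ∈ Ioo a b)
    (hf : IntervalIntegrable f volume a b) (hfc : ContinuousOn f (Ioo a b)) :
    HasDerivAt (fun u => ∫ s in u..b, f s) (-f t) t :=
  integral_hasDerivAt_left (hf.mono_set (uIcc_subset_uIcc_right (Icc_subset_uIcc
    (Ioo_subset_Icc_self ht)))) (hfc.stronglyMeasurableAtFilter isOpen_Ioo t ht)
    (hfc.continuousAt (isOpen_Ioo.mem_nhds ht))

theorem tendsto_integral_left_nhdsLT (hab : a < b) (hf : IntervalIntegrable f volume a b) :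
    Tendsto (fun u => ∫ s in u..b, f s) (𝓝[<] b) (𝓝 0) := by
  have hcont : Tendsto (fun u => ∫ s in u..b, f s) (𝓝[uIcc a b] b) (𝓝 (∫ s in b..b, f s)) :=
    continuousOn_primitive_interval_left ((intervalIntegrable_iff' (μ := volume)).1 hf) b
    right_mem_uIcc
  rw [integral_same] at hcont
  rw [← nhdsWithin_Ioo_eq_nhdsLT hab]
  exact hcont.mono_left (nhdsWithin_mono _ (Ioo_subset_Icc_self.trans Icc_subset_uIcc))

theorem integral_comp_min_mul_eq (ht : t ∈ Icc a b) (hp : ContinuousOn p (Icc a b))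
    (hf : IntervalIntegrable f volume a b) :
    ∫ s in a..b, p (min t s) * f s = (∫ s in a..t, p s * f s) + p t * ∫ s in t..b, f s := by
  have hpmin : ContinuousOn (fun s => p (min t s)) (uIcc a b) := by
    rw [uIcc_of_le (ht.1.trans ht.2)]
    exact hp.comp (continuous_const.min continuous_id).continuousOn fun s hs =>
      ⟨le_min ht.1 hs.1, (min_le_left _ _).trans ht.2⟩
  have hint := hf.continuousOn_mul hpmin
  rw [← integral_add_adjacent_intervals (b := t)
      (hint.mono_set (uIcc_subset_uIcc_left (Icc_subset_uIcc ht)))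
      (hint.mono_set (uIcc_subset_uIcc_right (Icc_subset_uIcc ht))),
    ← intervalIntegral.integral_const_mul]
  congr 1 <;> refine integral_congr fun s hs => ?_
  · rw [uIcc_of_le ht.1] at hs
    simp only [min_eq_right hs.2]
  · rw [uIcc_of_le ht.2] at hs
    simp only [min_eq_left hs.1]

theorem hasDerivAt_integral_comp_min_mul {p' : ℝ} (ht : t ∈ Ioo a b)
    (hp : ContinuousOn p (Icc a b)) (hp' : HasDerivAt p p' t)
    (hf : IntervalIntegrable f volume a b) (hfc : ContinuousOn f (Ioo a b)) :
    HasDerivAt (fun u => ∫ s in a..b, p (min u s) * f s) (p' * ∫ s in t..b, f s) t := by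
  have hnhds : Ioo a b ∈ 𝓝 t := isOpen_Ioo.mem_nhds ht
  have ht' : t ∈ uIcc a b := Icc_subset_uIcc (Ioo_subset_Icc_self ht)
  have hpf : ContinuousOn (fun s => p s * f s) (Ioo a b) :=
    (hp.mono Ioo_subset_Icc_self).mul hfc
  have hpf_int : IntervalIntegrable (fun s => p s * f s) volume a b :=
    hf.continuousOn_mul (uIcc_of_le (ht.1.trans ht.2).le ▸ hp)
  have hleft : HasDerivAt (fun u => ∫ s in a..u, p s * f s) (p t * f t) t :=
    integral_hasDerivAt_right (hpf_int.mono_set (uIcc_subset_uIcc_left ht'))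
      (hpf.stronglyMeasurableAtFilter isOpen_Ioo t ht) (hpf.continuousAt hnhds)
  have hright := hasDerivAt_integral_left_of_continuousOn ht hf hfc
  have hsplit : (fun u => ∫ s in a..b, p (min u s) * f s) =ᶠ[𝓝 t]
      fun u => (∫ s in a..u, p s * f s) + p u * ∫ s in u..b, f s := by
    filter_upwards [hnhds] with u hu
    exact integral_comp_min_mul_eq (Ioo_subset_Icc_self hu) hp hf
  exact ((hleft.add (hp'.mul hright)).congr_of_eventuallyEq hsplit).congr_deriv (by ring)

theorem hasDerivAt_integral_rpow_min_mul {α : ℝ} (hα : 0 < α) (ha : 0 ≤ a) (ht : t ∈ Ioo a b)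
    (hf : IntervalIntegrable f volume a b) (hfc : ContinuousOn f (Ioo a b)) :
    HasDerivAt (fun u => ∫ s in a..b, 1 / α * min u s ^ α * f s)
      (t ^ (α - 1) * ∫ s in t..b, f s) t := by
  refine (hasDerivAt_integral_comp_min_mul (p := fun u => 1 / α * u ^ α) ht
    (continuous_const.mul (continuous_rpow_const hα.le)).continuousOn
    ((hasDerivAt_rpow_const (Or.inl (ha.trans_lt ht.1).ne')).const_mul (1 / α)) hf hfc)
    |>.congr_deriv ?_
  field_simp

end MinKernel

theorem rpow_one_sub_mul_rpow_sub_one {u : ℝ} (hu : 0 < u) (a : ℝ) :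
    u ^ (1 - a) * u ^ (a - 1) = 1 := by
  rw [← rpow_add hu, sub_add_sub_cancel', sub_self, rpow_zero]

theorem intervalIntegrable_mul_rpow_sub_one {a b β : ℝ} {h : ℝ → ℝ}
    (hh : ContinuousOn h (uIcc a b)) (hβ : 0 < β) :
    IntervalIntegrable (fun s => h s * s ^ (β - 1)) volume a b :=
  (intervalIntegrable_rpow' (by linarith)).continuousOn_mul hh

/-- With `α, β ∈ (0,1]`, `G` the right-focal Green's function, `h` continuous on
`[0,1]`, and `x(t) = ∫₀¹ G(t,s) h(s) s^{β−1} ds`, we have `x(0) = 0`, the limit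
`lim_{t→1⁻} t^{1−α} x′(t)` exists and equals `0`, and, for every `t ∈ (0,1)`, `x` is
differentiable at `t`, `y(u) := u^{1−α} x′(u)` is differentiable at `t`, and
`−t^{1−β} y′(t) = h(t)`. -/
theorem right_focal_greens_function_solves_bvp
    (α β : ℝ) (hα : α ∈ Set.Ioc (0:ℝ) 1) (hβ : β ∈ Set.Ioc (0:ℝ) 1)
    (G : ℝ → ℝ → ℝ)
    (hG : ∀ t s : ℝ, G t s = if s ≤ t then (1 / α) * s ^ α else (1 / α) * t ^ α)
    (h : ℝ → ℝ) (hh : ContinuousOn h (Set.Icc 0 1))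
    (x : ℝ → ℝ) (hx : ∀ t : ℝ, x t = ∫ s in (0:ℝ)..1, G t s * h s * s ^ (β - 1)) :
    x 0 = 0 ∧
    Filter.Tendsto (fun t : ℝ => t ^ (1 - α) * deriv x t)
      (nhdsWithin 1 (Set.Iio (1:ℝ))) (nhds 0) ∧
    ∀ t ∈ Set.Ioo (0:ℝ) 1,
      DifferentiableAt ℝ x t ∧
      DifferentiableAt ℝ (fun u : ℝ => u ^ (1 - α) * deriv x u) t ∧
      -(t ^ (1 - β)) * deriv (fun u : ℝ => u ^ (1 - α) * deriv x u) t = h t := by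
  set f : ℝ → ℝ := fun s => h s * s ^ (β - 1)
  have hxp : x = fun t => ∫ s in (0:ℝ)..1, 1 / α * min t s ^ α * f s := by
    ext t
    refine (hx t).trans (integral_congr fun s _ => ?_)
    rw [hG, mul_assoc]
    split_ifs with hst
    · rw [min_eq_right hst]
    · rw [min_eq_left (le_of_not_ge hst)]
  have hf : IntervalIntegrable f volume 0 1 :=
    intervalIntegrable_mul_rpow_sub_one (by rwa [uIcc_of_le zero_le_one]) hβ.1
  have hfc : ContinuousOn f (Ioo 0 1) := (hh.mono Ioo_subset_Icc_self).mul fun s hs =>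
    (continuousAt_rpow_const s _ (Or.inl hs.1.ne')).continuousWithinAt
  have hx' : ∀ t ∈ Ioo (0:ℝ) 1, HasDerivAt x (t ^ (α - 1) * ∫ s in t..1, f s) t :=
    fun t ht => hxp ▸ hasDerivAt_integral_rpow_min_mul hα.1 le_rfl ht hf hfc
  have hy : EqOn (fun u => u ^ (1 - α) * deriv x u) (fun u => ∫ s in u..1, f s) (Ioo 0 1) :=
    fun u hu => by
      dsimp only
      rw [(hx' u hu).deriv, ← mul_assoc, rpow_one_sub_mul_rpow_sub_one hu.1, one_mul]
  refine ⟨?_, ?_, fun t ht => ⟨(hx' t ht).differentiableAt, ?_⟩⟩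
  · rw [hxp]
    refine (integral_comp_min_mul_eq (p := fun u => 1 / α * u ^ α) ⟨le_rfl, zero_le_one⟩
      (continuous_const.mul (continuous_rpow_const hα.1.le)).continuousOn hf).trans ?_
    simp [zero_rpow hα.1.ne']
  · exact (tendsto_integral_left_nhdsLT zero_lt_one hf).congr'
      (hy.symm.eventuallyEq_of_mem (Ioo_mem_nhdsLT zero_lt_one))
  · have hyd := (hasDerivAt_integral_left_of_continuousOn ht hf hfc).congr_of_eventuallyEq
      (hy.eventuallyEq_of_mem (isOpen_Ioo.mem_nhds ht))
    refine ⟨hyd.differentiableAt, ?_⟩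
    rw [hyd.deriv, neg_mul_neg, mul_left_comm, rpow_one_sub_mul_rpow_sub_one ht.1, mul_one]
end
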